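/- The doubling-and-shortcutting algorithm for the unrestricted MV-mTSP with at most m tours is a 2-approximation: given a multigraph X' with at most m components, r(V) edges, degree at least 2·r(v) − 1 at every vertex, and cost(X') ≤ OPT, doubling all edges of X' and shortcutting each component down to degree exactly 2·r(v) at every vertex yields a feasible solution X with at most m components, each vertex visited exactly r(v) times, and cost(X) ≤ 2·OPT. -/

import Mathlib

open Finset

noncomputable section

variable {V : Type*}

/-- Degree of `v` in a multigraph given by a multiset of (possibly diagonal) `Sym2` edges;
self-loops count twice. -/
def mdeg [DecidableEq V] (E : Multiset (Sym2 V)) (v : V) : ℕ :=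
  (E.map (Sym2.lift ⟨fun a b => (if a = v then 1 else 0) + (if b = v then 1 else 0),
    fun _ _ => add_comm _ _⟩)).sum

/-- Cost of a multigraph: multiplicity-weighted sum of (symmetrized) edge costs. -/
def mcost (c : V → V → ℝ) (E : Multiset (Sym2 V)) : ℝ :=
  (E.map (Sym2.lift ⟨fun a b => (c a b + c b a) / 2, fun _ _ => by ring⟩)).sum

/-- The edge multiset of the closed walk visiting the vertices of `w` in cyclic order.
A singleton list yields one self-loop. -/
def walkEdges (w : List V) : Multiset (Sym2 V) :=
  (((w.zip (w.rotate 1)).map (fun p => Sym2.mk p.1 p.2) : List (Sym2 V)) : Multiset (Sym2 V))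

/-- Connectivity of a multigraph on its support. -/
def connOn [DecidableEq V] (E : Multiset (Sym2 V)) : Prop :=
  ∀ u v, 0 < mdeg E u → 0 < mdeg E v →
    Relation.ReflTransGen (fun a b => s(a, b) ∈ E) u v

/-- Unrestricted MV-mTSP⁺ with arbitrary tours: edge multiset partitions into exactly `m`
non-empty closed walks, visiting each vertex `v` exactly `r v` times in total. -/
def feasP1 [Fintype V] [DecidableEq V] (r : V → ℕ) (m : ℕ) (E : Multiset (Sym2 V)) : Prop :=
  ∃ ws : Fin m → List V, (∀ i, ws i ≠ []) ∧ E = ∑ i, walkEdges (ws i) ∧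
    ∀ v, (∑ i, (ws i).count v) = r v

/-- Unrestricted MV-mTSP⁺ with disjoint tours. -/
def feasP2 [Fintype V] [DecidableEq V] (r : V → ℕ) (m : ℕ) (E : Multiset (Sym2 V)) : Prop :=
  ∃ ws : Fin m → List V, (∀ i, ws i ≠ []) ∧ E = ∑ i, walkEdges (ws i) ∧
    (∀ v, (∑ i, (ws i).count v) = r v) ∧
    ∀ i j, i ≠ j → ∀ v, v ∈ ws i → v ∉ ws j

/-- Unrestricted MV-mTSP₀ with arbitrary tours: at most `m` closed walks. -/
def feasP3 [Fintype V] [DecidableEq V] (r : V → ℕ) (m : ℕ) (E : Multiset (Sym2 V)) : Prop :=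
  ∃ k, k ≤ m ∧ ∃ ws : Fin k → List V, (∀ i, ws i ≠ []) ∧ E = ∑ i, walkEdges (ws i) ∧
    ∀ v, (∑ i, (ws i).count v) = r v

/-- Unrestricted MV-mTSP₀ with disjoint tours. -/
def feasP4 [Fintype V] [DecidableEq V] (r : V → ℕ) (m : ℕ) (E : Multiset (Sym2 V)) : Prop :=
  ∃ k, k ≤ m ∧ ∃ ws : Fin k → List V, (∀ i, ws i ≠ []) ∧ E = ∑ i, walkEdges (ws i) ∧
    (∀ v, (∑ i, (ws i).count v) = r v) ∧
    ∀ i j, i ≠ j → ∀ v, v ∈ ws i → v ∉ ws j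

/-- MV-mTSP⁺ with depots and arbitrary tours: exactly `m` tours, each containing exactly one
depot and at least one city; distinct tours use distinct depots; each city `v` is visited
`r v` times in total. -/
def feasP5 [Fintype V] [DecidableEq V] (D : Finset V) (r : V → ℕ) (m : ℕ)
    (E : Multiset (Sym2 V)) : Prop :=
  ∃ ws : Fin m → List V,
    (∀ i, (∃ d ∈ D, d ∈ ws i) ∧ (∃ v ∈ ws i, v ∉ D) ∧
      (∀ d ∈ D, ∀ d' ∈ D, d ∈ ws i → d' ∈ ws i → d = d')) ∧
    (∀ d ∈ D, ∀ i j, d ∈ ws i → d ∈ ws j → i = j) ∧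
    E = ∑ i, walkEdges (ws i) ∧
    ∀ v, v ∉ D → (∑ i, (ws i).count v) = r v

/-- MV-mTSP⁺ with depots and disjoint tours. -/
def feasP6 [Fintype V] [DecidableEq V] (D : Finset V) (r : V → ℕ) (m : ℕ)
    (E : Multiset (Sym2 V)) : Prop :=
  ∃ ws : Fin m → List V,
    (∀ i, (∃ d ∈ D, d ∈ ws i) ∧ (∃ v ∈ ws i, v ∉ D) ∧
      (∀ d ∈ D, ∀ d' ∈ D, d ∈ ws i → d' ∈ ws i → d = d')) ∧
    (∀ d ∈ D, ∀ i j, d ∈ ws i → d ∈ ws j → i = j) ∧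
    E = ∑ i, walkEdges (ws i) ∧
    (∀ v, v ∉ D → (∑ i, (ws i).count v) = r v) ∧
    ∀ i j, i ≠ j → ∀ v, v ∈ ws i → v ∉ ws j

/-- MV-mTSP₀ with depots and arbitrary tours: at most `m` tours. -/
def feasP7 [Fintype V] [DecidableEq V] (D : Finset V) (r : V → ℕ) (m : ℕ)
    (E : Multiset (Sym2 V)) : Prop :=
  ∃ k, k ≤ m ∧ ∃ ws : Fin k → List V,
    (∀ i, (∃ d ∈ D, d ∈ ws i) ∧ (∃ v ∈ ws i, v ∉ D) ∧
      (∀ d ∈ D, ∀ d' ∈ D, d ∈ ws i → d' ∈ ws i → d = d')) ∧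
    (∀ d ∈ D, ∀ i j, d ∈ ws i → d ∈ ws j → i = j) ∧
    E = ∑ i, walkEdges (ws i) ∧
    ∀ v, v ∉ D → (∑ i, (ws i).count v) = r v

/-- MV-mTSP₀ with depots and disjoint tours. -/
def feasP8 [Fintype V] [DecidableEq V] (D : Finset V) (r : V → ℕ) (m : ℕ)
    (E : Multiset (Sym2 V)) : Prop :=
  ∃ k, k ≤ m ∧ ∃ ws : Fin k → List V,
    (∀ i, (∃ d ∈ D, d ∈ ws i) ∧ (∃ v ∈ ws i, v ∉ D) ∧
      (∀ d ∈ D, ∀ d' ∈ D, d ∈ ws i → d' ∈ ws i → d = d')) ∧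
    (∀ d ∈ D, ∀ i j, d ∈ ws i → d ∈ ws j → i = j) ∧
    E = ∑ i, walkEdges (ws i) ∧
    (∀ v, v ∉ D → (∑ i, (ws i).count v) = r v) ∧
    ∀ i j, i ≠ j → ∀ v, v ∈ ws i → v ∉ ws j

/-- A multigraph with at most `m` connected components: its edges split into `m` (possibly
empty) parts, each connected on its support, with pairwise disjoint supports. -/
def atMostComponents [DecidableEq V] (m : ℕ) (E : Multiset (Sym2 V)) : Prop :=
  ∃ P : Fin m → Multiset (Sym2 V), E = ∑ i, P i ∧ (∀ i, connOn (P i)) ∧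
    ∀ i j, i ≠ j → ∀ v, 0 < mdeg (P i) v → mdeg (P j) v = 0

section Aux

variable {V : Type*}

/-- degree contribution of one edge -/
def dsum [DecidableEq V] (v : V) : Sym2 V → ℕ :=
  Sym2.lift ⟨fun a b => (if a = v then 1 else 0) + (if b = v then 1 else 0),
    fun _ _ => add_comm _ _⟩

lemma mdeg_eq [DecidableEq V] (E : Multiset (Sym2 V)) (v : V) :
    mdeg E v = (E.map (dsum v)).sum := rfl

lemma dsum_mk [DecidableEq V] (v a b : V) :
    dsum v s(a, b) = (if a = v then 1 else 0) + (if b = v then 1 else 0) := rfl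

lemma mdeg_zero [DecidableEq V] (v : V) : mdeg (0 : Multiset (Sym2 V)) v = 0 := rfl

lemma mdeg_add [DecidableEq V] (E F : Multiset (Sym2 V)) (v : V) :
    mdeg (E + F) v = mdeg E v + mdeg F v := by
  simp [mdeg_eq]

lemma mdeg_cons [DecidableEq V] (e : Sym2 V) (E : Multiset (Sym2 V)) (v : V) :
    mdeg (e ::ₘ E) v = dsum v e + mdeg E v := by
  simp [mdeg_eq]

lemma mdeg_sum [DecidableEq V] {ι : Type*} (s : Finset ι) (P : ι → Multiset (Sym2 V)) (v : V) :
    mdeg (∑ i ∈ s, P i) v = ∑ i ∈ s, mdeg (P i) v := by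
  classical
  induction s using Finset.induction with
  | empty => simp [mdeg_zero]
  | @insert a s h ih => simp [Finset.sum_insert h, mdeg_add, ih]

lemma dsum_pos_of_mem [DecidableEq V] {v : V} {e : Sym2 V} (h : v ∈ e) : 0 < dsum v e := by
  induction e using Sym2.ind with
  | _ a b =>
    rcases Sym2.mem_iff.mp h with rfl | rfl <;> simp [dsum_mk]

lemma mdeg_pos_of_mem [DecidableEq V] {v : V} {e : Sym2 V} {E : Multiset (Sym2 V)}
    (he : e ∈ E) (hv : v ∈ e) : 0 < mdeg E v := by
  rw [← Multiset.cons_erase he, mdeg_cons]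
  have := dsum_pos_of_mem hv
  omega

lemma exists_mem_of_mdeg_pos [DecidableEq V] {v : V} {E : Multiset (Sym2 V)}
    (h : 0 < mdeg E v) : ∃ e ∈ E, v ∈ e := by
  by_contra hc
  push_neg at hc
  have : mdeg E v = 0 := by
    rw [mdeg_eq]
    apply Multiset.sum_eq_zero
    intro x hx
    rcases Multiset.mem_map.mp hx with ⟨e, he, rfl⟩
    induction e using Sym2.ind with
    | _ a b =>
      have ha : a ≠ v := fun h' => hc _ he (h' ▸ Sym2.mem_mk_left a b)
      have hb : b ≠ v := fun h' => hc _ he (h' ▸ Sym2.mem_mk_right a b)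
      simp [dsum_mk, ha, hb]
  omega

/-- symmetrized edge cost -/
def ecost (c : V → V → ℝ) : Sym2 V → ℝ :=
  Sym2.lift ⟨fun a b => (c a b + c b a) / 2, fun _ _ => by ring⟩

lemma mcost_eq (c : V → V → ℝ) (E : Multiset (Sym2 V)) :
    mcost c E = (E.map (ecost c)).sum := rfl

lemma ecost_mk (c : V → V → ℝ) (a b : V) : ecost c s(a, b) = (c a b + c b a) / 2 := rfl

lemma mcost_add (c : V → V → ℝ) (E F : Multiset (Sym2 V)) :
    mcost c (E + F) = mcost c E + mcost c F := by simp [mcost_eq]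

lemma mcost_sum (c : V → V → ℝ) {ι : Type*} (s : Finset ι) (P : ι → Multiset (Sym2 V)) :
    mcost c (∑ i ∈ s, P i) = ∑ i ∈ s, mcost c (P i) := by
  classical
  induction s using Finset.induction with
  | empty => simp [mcost_eq]
  | @insert a s h ih => simp [Finset.sum_insert h, mcost_add, ih]

lemma mcost_nonneg {c : V → V → ℝ} (hnonneg : ∀ u v, 0 ≤ c u v) (E : Multiset (Sym2 V)) :
    0 ≤ mcost c E := by
  rw [mcost_eq]
  apply Multiset.sum_nonneg
  intro x hx
  rcases Multiset.mem_map.mp hx with ⟨e, _, rfl⟩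
  induction e using Sym2.ind with
  | _ a b =>
    have := hnonneg a b; have := hnonneg b a
    rw [ecost_mk]; linarith

end Aux
section Walk

variable {V : Type*}

lemma walkEdges_nil : walkEdges ([] : List V) = 0 := by simp [walkEdges]

lemma rotate_one_cons (a : V) (l : List V) : (a :: l).rotate 1 = l ++ [a] := by
  simpa using List.rotate_cons_succ l a 0

lemma walkEdges_cons (a : V) (t : List V) :
    walkEdges (a :: t) = ((((a :: t).zip (t ++ [a])).map (fun p => Sym2.mk p.1 p.2) : List (Sym2 V)) : Multiset (Sym2 V)) := by
  rw [walkEdges, rotate_one_cons]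

lemma zip_rotate_one (l l' : List V) (h : l.length = l'.length) :
    (l.rotate 1).zip (l'.rotate 1) = (l.zip l').rotate 1 := by
  cases l with
  | nil =>
    cases l' with
    | nil => rfl
    | cons b s => simp at h
  | cons a t =>
    cases l' with
    | nil => simp at h
    | cons b s =>
      simp only [List.length_cons, Nat.succ_inj] at h
      rw [rotate_one_cons, rotate_one_cons, List.zip_cons_cons, rotate_one_cons,
        List.zip_append h]
      rfl

lemma walkEdges_rotate_one (l : List V) : walkEdges (l.rotate 1) = walkEdges l := by
  rw [walkEdges, walkEdges, zip_rotate_one l (l.rotate 1) (by simp)]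
  exact Multiset.coe_eq_coe.mpr (((l.zip (l.rotate 1)).rotate_perm 1).map (fun p => Sym2.mk p.1 p.2))

lemma walkEdges_rotate (l : List V) (n : ℕ) : walkEdges (l.rotate n) = walkEdges l := by
  induction n with
  | zero => rw [List.rotate_zero]
  | succ k ih =>
    have : l.rotate (k + 1) = (l.rotate k).rotate 1 := by rw [List.rotate_rotate]
    rw [this, walkEdges_rotate_one, ih]

lemma exists_rotate_cons {l : List V} {a : V} (h : a ∈ l) :
    ∃ t, walkEdges (a :: t) = walkEdges l ∧ List.Perm (a :: t) l := by
  obtain ⟨s, t, rfl⟩ := List.append_of_mem h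
  refine ⟨t ++ s, ?_, ?_⟩
  · have hrot : (s ++ a :: t).rotate s.length = a :: (t ++ s) := by
      rw [List.rotate_eq_drop_append_take (by simp)]
      simp
    calc walkEdges (a :: (t ++ s)) = walkEdges ((s ++ a :: t).rotate s.length) := by rw [hrot]
      _ = walkEdges (s ++ a :: t) := walkEdges_rotate _ _
  · have hrot : (s ++ a :: t).rotate s.length = a :: (t ++ s) := by
      rw [List.rotate_eq_drop_append_take (by simp)]
      simp
    exact hrot ▸ ((s ++ a :: t).rotate_perm s.length)

lemma walkEdges_glue (a : V) (t₁ t₂ : List V) :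
    walkEdges (a :: (t₁ ++ a :: t₂)) = walkEdges (a :: t₁) + walkEdges (a :: t₂) := by
  rw [walkEdges_cons, walkEdges_cons, walkEdges_cons]
  have h1 : a :: (t₁ ++ a :: t₂) = (a :: t₁) ++ (a :: t₂) := by simp
  have h2 : (t₁ ++ a :: t₂) ++ [a] = (t₁ ++ [a]) ++ (t₂ ++ [a]) := by simp
  rw [h1, h2, List.zip_append (by simp), List.map_append]
  rfl

lemma merge_walks [DecidableEq V] {w₁ w₂ : List V} {a : V} (h₁ : a ∈ w₁) (h₂ : a ∈ w₂) :
    ∃ w : List V, w ≠ [] ∧ walkEdges w = walkEdges w₁ + walkEdges w₂ ∧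
      ∀ v, w.count v = w₁.count v + w₂.count v := by
  classical
  obtain ⟨t₁, he₁, hp₁⟩ := exists_rotate_cons h₁
  obtain ⟨t₂, he₂, hp₂⟩ := exists_rotate_cons h₂
  refine ⟨a :: (t₁ ++ a :: t₂), by simp, ?_, ?_⟩
  · rw [walkEdges_glue, he₁, he₂]
  · intro v
    rw [← hp₁.count_eq, ← hp₂.count_eq]
    simp [List.count_cons, List.count_append]
    omega

end Walk
section Euler

variable {V : Type*}

def stepR (F : Multiset (Sym2 V)) (x y : V) : Prop := s(x, y) ∈ F

lemma stepR_symm {F : Multiset (Sym2 V)} {x y : V} (h : stepR F x y) : stepR F y x := by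
  rw [stepR, Sym2.eq_swap]; exact h

lemma rtg_symm {F : Multiset (Sym2 V)} {x y : V}
    (h : Relation.ReflTransGen (stepR F) x y) : Relation.ReflTransGen (stepR F) y x := by
  induction h with
  | refl => exact .refl
  | tail _ hbc ih => exact Relation.ReflTransGen.head (stepR_symm hbc) ih

lemma walkEdges_pair (a b : V) : walkEdges [a, b] = s(a, b) ::ₘ s(a, b) ::ₘ 0 := by
  rw [walkEdges_cons]
  show (([s(a, b), s(b, a)] : List (Sym2 V)) : Multiset (Sym2 V)) = _
  rw [show s(b, a) = s(a, b) from Sym2.eq_swap]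
  rfl

lemma count_pair [DecidableEq V] (a b v : V) :
    ([a, b] : List V).count v = dsum v s(a, b) := by
  simp [List.count_cons, dsum_mk]
  split_ifs <;> simp_all

lemma euler_double [DecidableEq V] :
    ∀ n (E : Multiset (Sym2 V)), Multiset.card E = n → E ≠ 0 → connOn E →
      ∃ w : List V, walkEdges w = E + E ∧ ∀ v, w.count v = mdeg E v := by
  intro n
  induction n using Nat.strong_induction_on with
  | _ n IH =>
  intro E hcard hne hconn
  obtain ⟨e, he⟩ := Multiset.exists_mem_of_ne_zero hne
  induction e using Sym2.ind with
  | _ a b =>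
  classical
  set E' := E.erase s(a, b) with hE'def
  have hE : E = s(a, b) ::ₘ E' := (Multiset.cons_erase he).symm
  set RA : V → Prop := fun x => Relation.ReflTransGen (stepR E') a x with hRA
  set RB : V → Prop := fun x => Relation.ReflTransGen (stepR E') b x with hRB
  set A : Multiset (Sym2 V) := E'.filter (fun f => ∃ x ∈ f, RA x) with hAdef
  set B : Multiset (Sym2 V) := E'.filter (fun f => ¬ ∃ x ∈ f, RA x) with hBdef
  have hAB : A + B = E' := Multiset.filter_add_not _ _
  have hRA_mem : ∀ {x y : V}, RA x → s(x, y) ∈ E' → s(x, y) ∈ A := by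
    intro x y h1 h2
    exact Multiset.mem_filter.mpr ⟨h2, x, Sym2.mem_mk_left x y, h1⟩
  have hRA_of_mem_A : ∀ {f}, f ∈ A → ∀ u ∈ f, RA u := by
    intro f hf u hu
    obtain ⟨hfE, x, hx, hrx⟩ := Multiset.mem_filter.mp hf
    induction f using Sym2.ind with
    | _ p q =>
    rcases Sym2.mem_iff.mp hx with rfl | rfl <;> rcases Sym2.mem_iff.mp hu with rfl | rfl
    · exact hrx
    · exact hrx.tail hfE
    · exact hrx.tail (show stepR E' x u by rw [stepR, Sym2.eq_swap]; exact hfE)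
    · exact hrx
  have hA_path : ∀ x, RA x → Relation.ReflTransGen (stepR A) a x := by
    intro x hx
    induction hx with
    | refl => exact .refl
    | tail hay hyx ih => exact ih.tail (hRA_mem hay hyx)
  have hsplit : ∀ {u x : V}, Relation.ReflTransGen (stepR E) u x →
      Relation.ReflTransGen (stepR E') u x ∨ RA u ∨ RB u := by
    intro u x h
    induction h using Relation.ReflTransGen.head_induction_on with
    | refl => exact .inl .refl
    | @head p q hstep htail ih =>
      by_cases hmem : s(p, q) ∈ E'
      · rcases ih with h | h | h
        · exact .inl (h.head hmem)
        · exact .inr (.inl (h.tail (stepR_symm hmem)))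
        · exact .inr (.inr (h.tail (stepR_symm hmem)))
      · have hpq : s(p, q) ∈ E := hstep
        rw [hE] at hpq
        rcases Multiset.mem_cons.mp hpq with h | h
        · rcases Sym2.eq_iff.mp h with ⟨rfl, rfl⟩ | ⟨rfl, rfl⟩
          · exact .inr (.inl .refl)
          · exact .inr (.inr .refl)
        · exact absurd h hmem
  have hends : ∀ {u : V}, 0 < mdeg E' u → RA u ∨ RB u := by
    intro u hu
    have huE : 0 < mdeg E u := by
      rw [hE, mdeg_cons] at *; omega
    have haE : 0 < mdeg E a := mdeg_pos_of_mem he (Sym2.mem_mk_left a b)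
    rcases hsplit (hconn u a huE haE) with h | h | h
    · exact .inl (rtg_symm h)
    · exact .inl h
    · exact .inr h
  have hconnA : connOn A := by
    intro u v hu hv
    obtain ⟨fu, hfu, hufu⟩ := exists_mem_of_mdeg_pos hu
    obtain ⟨fv, hfv, hvfv⟩ := exists_mem_of_mdeg_pos hv
    exact (rtg_symm (hA_path u (hRA_of_mem_A hfu u hufu))).trans
      (hA_path v (hRA_of_mem_A hfv v hvfv))
  have hdegAa : A ≠ 0 → 0 < mdeg A a := by
    intro hA0
    obtain ⟨f, hf⟩ := Multiset.exists_mem_of_ne_zero hA0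
    obtain ⟨hfE, x, hx, hrx⟩ := Multiset.mem_filter.mp hf
    rcases Relation.ReflTransGen.cases_head hrx with h | ⟨y, hay, _⟩
    · exact mdeg_pos_of_mem hf (by rw [h]; exact hx)
    · exact mdeg_pos_of_mem (hRA_mem Relation.ReflTransGen.refl hay) (Sym2.mem_mk_left a y)
  have hRB_of_mem_B : ∀ {f}, f ∈ B → ∀ u ∈ f, RB u := by
    intro f hf u hu
    obtain ⟨hfE, hnex⟩ := Multiset.mem_filter.mp hf
    rcases hends (mdeg_pos_of_mem hfE hu) with h | h
    · exact absurd ⟨u, hu, h⟩ hnex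
    · exact h
  have hnRAb : B ≠ 0 → ¬ RA b := by
    intro hB0 hrb
    obtain ⟨f, hf⟩ := Multiset.exists_mem_of_ne_zero hB0
    obtain ⟨hfE, hnex⟩ := Multiset.mem_filter.mp hf
    induction f using Sym2.ind with
    | _ p q =>
    have hrp : RB p := hRB_of_mem_B hf p (Sym2.mem_mk_left p q)
    exact hnex ⟨p, Sym2.mem_mk_left p q, hrb.trans hrp⟩
  have hB_path : B ≠ 0 → ∀ x, RB x → Relation.ReflTransGen (stepR B) b x ∧ ¬ RA x := by
    intro hB0 x hx
    induction hx with
    | refl => exact ⟨.refl, hnRAb hB0⟩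
    | @tail y x' hby hyx ih =>
      have hnx : ¬ RA x' := fun hax => ih.2 (hax.tail (stepR_symm hyx))
      have hedge : s(y, x') ∈ B := by
        refine Multiset.mem_filter.mpr ⟨hyx, ?_⟩
        rintro ⟨z, hz, hrz⟩
        rcases Sym2.mem_iff.mp hz with rfl | rfl
        · exact ih.2 hrz
        · exact hnx hrz
      exact ⟨ih.1.tail hedge, hnx⟩
  have hconnB : connOn B := by
    intro u v hu hv
    obtain ⟨fu, hfu, hufu⟩ := exists_mem_of_mdeg_pos hu
    obtain ⟨fv, hfv, hvfv⟩ := exists_mem_of_mdeg_pos hv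
    have hB0 : B ≠ 0 := fun h => by rw [h] at hfu; exact absurd hfu (Multiset.notMem_zero _)
    exact (rtg_symm (hB_path hB0 u (hRB_of_mem_B hfu u hufu)).1).trans
      (hB_path hB0 v (hRB_of_mem_B hfv v hvfv)).1
  have hdegBb : B ≠ 0 → 0 < mdeg B b := by
    intro hB0
    obtain ⟨f, hf⟩ := Multiset.exists_mem_of_ne_zero hB0
    induction f using Sym2.ind with
    | _ p q =>
    have hrp : RB p := hRB_of_mem_B hf p (Sym2.mem_mk_left p q)
    rcases Relation.ReflTransGen.cases_head hrp with h | ⟨y, hby, _⟩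
    · exact mdeg_pos_of_mem hf (by rw [h]; exact Sym2.mem_mk_left p q)
    · have hnb := hnRAb hB0
      have hedge : s(b, y) ∈ B := by
        refine Multiset.mem_filter.mpr ⟨hby, ?_⟩
        rintro ⟨z, hz, hrz⟩
        rcases Sym2.mem_iff.mp hz with rfl | rfl
        · exact hnb hrz
        · exact hnb (hrz.tail (stepR_symm hby))
      exact mdeg_pos_of_mem hedge (Sym2.mem_mk_left b y)
  have hcardE' : Multiset.card E' < n := by
    rw [← hcard, hE]; simp
  have hcardA : Multiset.card A < n :=
    lt_of_le_of_lt (by rw [← hAB] at *; have := Multiset.card_add A B; omega) hcardE'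
  have hcardB : Multiset.card B < n :=
    lt_of_le_of_lt (by rw [← hAB] at *; have := Multiset.card_add A B; omega) hcardE'
  have getW : ∀ (F : Multiset (Sym2 V)) (x : V), F ≠ 0 → connOn F → 0 < mdeg F x →
      Multiset.card F < n →
      ∃ w : List V, walkEdges w = F + F ∧ (∀ v, w.count v = mdeg F v) ∧ x ∈ w := by
    intro F x h0 hc hx hlt
    obtain ⟨w, hw, hcnt⟩ := IH _ hlt F rfl h0 hc
    refine ⟨w, hw, hcnt, List.count_pos_iff.mp ?_⟩
    rw [hcnt]; exact hx
  have hEeq : E = s(a, b) ::ₘ (A + B) := by rw [hAB]; exact hE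
  by_cases hA0 : A = 0 <;> by_cases hB0 : B = 0
  · -- E = {s(a,b)}
    refine ⟨[a, b], ?_, ?_⟩
    · rw [walkEdges_pair, hEeq, hA0, hB0]
      rfl
    · intro v
      rw [count_pair, hEeq, hA0, hB0, mdeg_cons]
      simp [mdeg_zero, mdeg_add]
  · -- A = 0, B ≠ 0
    obtain ⟨wB, hwBe, hwBc, hbB⟩ := getW B b hB0 hconnB (hdegBb hB0) hcardB
    obtain ⟨w, hwne, hwe, hwc⟩ := merge_walks (show b ∈ [a, b] by simp) hbB
    refine ⟨w, ?_, ?_⟩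
    · rw [hwe, walkEdges_pair, hwBe, hEeq, hA0]
      simp only [← Multiset.singleton_add, zero_add]
      abel
    · intro v
      rw [hwc, count_pair, hwBc, hEeq, hA0, mdeg_cons, mdeg_add, mdeg_zero]
      omega
  · -- A ≠ 0, B = 0
    obtain ⟨wA, hwAe, hwAc, haA⟩ := getW A a hA0 hconnA (hdegAa hA0) hcardA
    obtain ⟨w, hwne, hwe, hwc⟩ := merge_walks (show a ∈ [a, b] by simp) haA
    refine ⟨w, ?_, ?_⟩
    · rw [hwe, walkEdges_pair, hwAe, hEeq, hB0]
      simp only [← Multiset.singleton_add, add_zero]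
      abel
    · intro v
      rw [hwc, count_pair, hwAc, hEeq, hB0, mdeg_cons, mdeg_add, mdeg_zero]
      omega
  · -- both nonempty
    obtain ⟨wA, hwAe, hwAc, haA⟩ := getW A a hA0 hconnA (hdegAa hA0) hcardA
    obtain ⟨wB, hwBe, hwBc, hbB⟩ := getW B b hB0 hconnB (hdegBb hB0) hcardB
    obtain ⟨w₁, hw₁ne, hw₁e, hw₁c⟩ := merge_walks (show a ∈ [a, b] by simp) haA
    have hbw₁ : b ∈ w₁ := by
      rw [← List.count_pos_iff, hw₁c]
      have : 0 < ([a, b] : List V).count b := List.count_pos_iff.mpr (by simp)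
      omega
    obtain ⟨w, hwne, hwe, hwc⟩ := merge_walks hbw₁ hbB
    refine ⟨w, ?_, ?_⟩
    · rw [hwe, hw₁e, walkEdges_pair, hwAe, hwBe, hEeq]
      simp only [← Multiset.singleton_add]
      abel
    · intro v
      rw [hwc, hw₁c, count_pair, hwAc, hwBc, hEeq, mdeg_cons, mdeg_add]
      omega

end Euler
section Shortcut

variable {V : Type*}

lemma mcost_coe_map (c : V → V → ℝ) (L : List (V × V)) :
    mcost c ((L.map (fun p => Sym2.mk p.1 p.2) : List (Sym2 V)) : Multiset (Sym2 V)) =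
      (L.map (fun p => (c p.1 p.2 + c p.2 p.1) / 2)).sum := by
  rw [mcost_eq, Multiset.map_coe, Multiset.sum_coe, List.map_map]
  rfl

lemma walkEdges_shortcut_cost (c : V → V → ℝ)
    (htri : ∀ u v w, c u w ≤ c u v + c v w)
    (v h : V) (s : List V) :
    mcost c (walkEdges (h :: s)) ≤ mcost c (walkEdges (v :: h :: s)) := by
  obtain ⟨q, z, hqz⟩ : ∃ q z, h :: s = q ++ [z] :=
    ⟨(h :: s).dropLast, (h :: s).getLast (by simp),
      (List.dropLast_append_getLast (by simp)).symm⟩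
  have hlen : q.length = s.length := by
    have := congrArg List.length hqz; simp at this; omega
  have e1 : walkEdges (v :: h :: s) =
      ((((v, h) :: (q.zip s ++ [(z, v)])).map (fun p => Sym2.mk p.1 p.2) : List (Sym2 V)) : Multiset (Sym2 V)) := by
    rw [walkEdges_cons]
    congr 1
    show ((v :: (h :: s)).zip ((h :: s) ++ [v])).map (fun p => Sym2.mk p.1 p.2) = _
    rw [show (h :: s) ++ [v] = h :: (s ++ [v]) from rfl, List.zip_cons_cons]
    congr 1
    rw [hqz, List.zip_append hlen]
    rfl
  have e2 : walkEdges (h :: s) =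
      (((q.zip s ++ [(z, h)]).map (fun p => Sym2.mk p.1 p.2) : List (Sym2 V)) : Multiset (Sym2 V)) := by
    rw [walkEdges_cons]
    congr 1
    conv_lhs => rw [show ((h :: s).zip (s ++ [h])) = ((q ++ [z]).zip (s ++ [h])) by rw [← hqz]]
    rw [List.zip_append hlen]
    rfl
  rw [e1, e2, mcost_coe_map, mcost_coe_map]
  simp only [List.map_append, List.map_cons, List.sum_append, List.sum_cons, List.map_nil,
    List.sum_nil]
  have h1 := htri z v h
  have h2 := htri h v z
  linarith

lemma shortcut_step [DecidableEq V] (c : V → V → ℝ)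
    (htri : ∀ u v w, c u w ≤ c u v + c v w)
    {w : List V} {v : V} (hv : v ∈ w) (hlen : 2 ≤ w.length) :
    ∃ w' : List V, (w'.count v = w.count v - 1) ∧ (∀ u, u ≠ v → w'.count u = w.count u) ∧
      w'.length = w.length - 1 ∧
      mcost c (walkEdges w') ≤ mcost c (walkEdges w) := by
  obtain ⟨t, hte, htp⟩ := exists_rotate_cons hv
  have hlw : (v :: t).length = w.length := htp.length_eq
  obtain ⟨h, s, rfl⟩ : ∃ h s, t = h :: s := by
    cases t with
    | nil => simp at hlw; omega
    | cons h s => exact ⟨h, s, rfl⟩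
  refine ⟨h :: s, ?_, ?_, ?_, ?_⟩
  · rw [← htp.count_eq]
    simp [List.count_cons]
  · intro u hu
    rw [← htp.count_eq]
    simp [List.count_cons, Ne.symm hu]
  · simp at hlw ⊢; omega
  · rw [← hte]
    exact walkEdges_shortcut_cost c htri v h s

lemma length_eq_sum_count [Fintype V] [DecidableEq V] (w : List V) :
    w.length = ∑ v, w.count v := by
  induction w with
  | nil => simp
  | cons a t ih =>
    simp [List.count_cons, ih, Finset.sum_add_distrib]

lemma reduce_walk [Fintype V] [DecidableEq V] (c : V → V → ℝ)
    (htri : ∀ u v w, c u w ≤ c u v + c v w) :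
    ∀ (N : ℕ) (w : List V) (target : V → ℕ),
      (∀ v, target v ≤ w.count v) → (1 ≤ ∑ v, target v) →
      w.length = N + ∑ v, target v →
      ∃ w' : List V, (∀ v, w'.count v = target v) ∧
        mcost c (walkEdges w') ≤ mcost c (walkEdges w) := by
  intro N
  induction N with
  | zero =>
    intro w target hle hpos hlen
    refine ⟨w, ?_, le_refl _⟩
    have hsum : ∑ v, w.count v = ∑ v, target v := by
      rw [← length_eq_sum_count]; omega
    intro v
    by_contra hne
    have hlt : target v < w.count v := lt_of_le_of_ne (hle v) (fun h => hne h.symm)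
    have : ∑ u, target u < ∑ u, w.count u :=
      Finset.sum_lt_sum (fun i _ => hle i) ⟨v, Finset.mem_univ v, hlt⟩
    omega
  | succ N ih =>
    intro w target hle hpos hlen
    obtain ⟨v, hv⟩ : ∃ v, target v < w.count v := by
      by_contra hc; push_neg at hc
      have : ∑ v, w.count v ≤ ∑ v, target v := Finset.sum_le_sum (fun i _ => hc i)
      rw [← length_eq_sum_count] at this; omega
    have hvm : v ∈ w := List.count_pos_iff.mp (by omega)
    have hlen2 : 2 ≤ w.length := by omega
    obtain ⟨w', h1, h2, h3, h4⟩ := shortcut_step c htri hvm hlen2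
    have hle' : ∀ u, target u ≤ w'.count u := by
      intro u
      by_cases hu : u = v
      · subst hu; omega
      · rw [h2 u hu]; exact hle u
    have hlen' : w'.length = N + ∑ v, target v := by omega
    obtain ⟨w'', hc'', hcost''⟩ := ih w' target hle' hpos hlen'
    exact ⟨w'', hc'', le_trans hcost'' h4⟩

end Shortcut
section Main

variable {V : Type*}

lemma sum_filter_equiv {α M : Type*} [AddCommMonoid M]
    (s : Finset α) (g : α → M) :
    ∑ j : Fin s.card, g (s.equivFin.symm j : α) = ∑ i ∈ s, g i := by
  rw [← Finset.sum_coe_sort s g]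
  exact (Fintype.sum_equiv s.equivFin (fun x => g x) (fun j => g (s.equivFin.symm j))
    (fun x => by simp)).symm

lemma tour_of_component [Fintype V] [DecidableEq V] (c : V → V → ℝ)
    (htri : ∀ u v w, c u w ≤ c u v + c v w) (r : V → ℕ)
    (F : Multiset (Sym2 V)) (hF : F ≠ 0) (hconn : connOn F)
    (hr : ∀ v, 1 ≤ r v)
    (hdeg : ∀ v, 0 < mdeg F v → r v ≤ mdeg F v) :
    ∃ w : List V, w ≠ [] ∧
      (∀ v, w.count v = if 0 < mdeg F v then r v else 0) ∧
      mcost c (walkEdges w) ≤ 2 * mcost c F := by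
  classical
  obtain ⟨w, hwe, hwc⟩ := euler_double _ F rfl hF hconn
  set target : V → ℕ := fun v => if 0 < mdeg F v then r v else 0 with htarget
  obtain ⟨e, he⟩ := Multiset.exists_mem_of_ne_zero hF
  obtain ⟨p, hp⟩ : ∃ p, p ∈ e := by
    induction e using Sym2.ind with
    | _ x y => exact ⟨x, Sym2.mem_mk_left x y⟩
  have hpdeg : 0 < mdeg F p := mdeg_pos_of_mem he hp
  have hptarget : 1 ≤ target p := by
    simp only [htarget, if_pos hpdeg]
    exact hr p
  have hle : ∀ v, target v ≤ w.count v := by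
    intro v
    rw [hwc]
    by_cases h : 0 < mdeg F v
    · simp only [htarget, if_pos h]
      exact hdeg v h
    · simp [htarget, h]
  have hpos : 1 ≤ ∑ v, target v :=
    le_trans hptarget (Finset.single_le_sum (fun i _ => Nat.zero_le _) (Finset.mem_univ _))
  have hlen : w.length = (w.length - ∑ v, target v) + ∑ v, target v := by
    have : ∑ v, target v ≤ ∑ v, w.count v := Finset.sum_le_sum (fun i _ => hle i)
    rw [length_eq_sum_count]
    omega
  obtain ⟨w', hc', hcost'⟩ := reduce_walk c htri _ w target hle hpos hlen
  refine ⟨w', ?_, fun v => hc' v, ?_⟩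
  · have : 0 < w'.count p := by rw [hc' p]; omega
    exact List.ne_nil_of_mem (List.count_pos_iff.mp this)
  · calc mcost c (walkEdges w') ≤ mcost c (walkEdges w) := hcost'
      _ = 2 * mcost c F := by rw [hwe, mcost_add]; ring

end Main

/-- Doubling and shortcutting yields a 2-approximation for the unrestricted
MV-mTSP₀: from a multigraph `X'` with at most `m` components, `r(V)` edges, degree at least
`2·r(v) − 1` everywhere, and cost at most `opt` (the optimum), one obtains a feasible solution
with at most `m` tours, each vertex visited exactly `r(v)` times, of cost at most `2·opt`. -/
theorem double_and_shortcut_two_approx [Fintype V] [DecidableEq V]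
    (c : V → V → ℝ) (r : V → ℕ) (m : ℕ) (opt : ℝ)
    (hsymm : ∀ u v, c u v = c v u)
    (hnonneg : ∀ u v, 0 ≤ c u v)
    (htri : ∀ u v w, c u w ≤ c u v + c v w)
    (hloop : ∀ v u, u ≠ v → c v v ≤ 2 * c u v)
    (hr : ∀ v, 1 ≤ r v) (hm : 1 ≤ m)
    (X' : Multiset (Sym2 V))
    (hcompX' : atMostComponents m X')
    (hcardX' : Multiset.card X' = ∑ v, r v)
    (hdegX' : ∀ v, 2 * r v - 1 ≤ mdeg X' v)
    (hcostX' : mcost c X' ≤ opt) :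
    ∃ X : Multiset (Sym2 V), feasP3 r m X ∧ mcost c X ≤ 2 * opt := by
  classical
  obtain ⟨P, hPsum, hPconn, hPdisj⟩ := hcompX'
  have hvdeg : ∀ v, 0 < mdeg X' v := by
    intro v
    have h1 := hdegX' v
    have h2 := hr v
    omega
  have hmdegsum : ∀ v, mdeg X' v = ∑ j, mdeg (P j) v := by
    intro v
    rw [hPsum, mdeg_sum]
  have hPdeg : ∀ i v, 0 < mdeg (P i) v → r v ≤ mdeg (P i) v := by
    intro i v hpos
    have hsingle : ∑ j, mdeg (P j) v = mdeg (P i) v := by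
      apply Finset.sum_eq_single_of_mem i (Finset.mem_univ i)
      intro j _ hj
      exact hPdisj i j (fun h => hj h.symm) v hpos
    have h1 := hdegX' v
    have h2 := hr v
    have h3 := hmdegsum v
    omega
  have tours : ∀ i, P i ≠ 0 → ∃ w : List V, w ≠ [] ∧
      (∀ v, w.count v = if 0 < mdeg (P i) v then r v else 0) ∧
      mcost c (walkEdges w) ≤ 2 * mcost c (P i) :=
    fun i hi => tour_of_component c htri r (P i) hi (hPconn i) hr (hPdeg i)
  choose! w hw using tours
  set s : Finset (Fin m) := Finset.univ.filter (fun i => P i ≠ 0) with hs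
  have hmem_s : ∀ {i}, i ∈ s ↔ P i ≠ 0 := by
    intro i
    simp [hs]
  have hkm : s.card ≤ m := by
    calc s.card ≤ (Finset.univ : Finset (Fin m)).card := Finset.card_filter_le _ _
      _ = m := by simp
  set ws : Fin s.card → List V := fun j => w (s.equivFin.symm j : Fin m) with hws
  have hsum1 : (∑ j, walkEdges (ws j)) = ∑ i ∈ s, walkEdges (w i) :=
    sum_filter_equiv s (fun i => walkEdges (w i))
  have hsum2 : ∀ v, (∑ j, (ws j).count v) = ∑ i ∈ s, (w i).count v :=
    fun v => sum_filter_equiv s (fun i => (w i).count v)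
  have hsum3 : mcost c (∑ j, walkEdges (ws j)) = ∑ i ∈ s, mcost c (walkEdges (w i)) := by
    rw [hsum1, mcost_sum]
  refine ⟨∑ j, walkEdges (ws j), ⟨s.card, hkm, ws, ?_, rfl, ?_⟩, ?_⟩
  · intro j
    exact (hw _ (hmem_s.mp (s.equivFin.symm j).2)).1
  · intro v
    rw [hsum2]
    obtain ⟨i₀, hi₀⟩ : ∃ i₀, 0 < mdeg (P i₀) v := by
      by_contra hc
      push_neg at hc
      have : ∑ j, mdeg (P j) v = 0 := Finset.sum_eq_zero (fun j _ => by have := hc j; omega)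
      have := hvdeg v
      have := hmdegsum v
      omega
    have hi₀s : i₀ ∈ s := by
      rw [hmem_s]
      obtain ⟨f, hf, _⟩ := exists_mem_of_mdeg_pos hi₀
      intro h0
      rw [h0] at hf
      exact absurd hf (Multiset.notMem_zero _)
    rw [Finset.sum_eq_single_of_mem i₀ hi₀s]
    · rw [(hw i₀ (hmem_s.mp hi₀s)).2.1 v, if_pos hi₀]
    · intro j hj hji
      rw [(hw j (hmem_s.mp hj)).2.1 v,
        if_neg (by rw [hPdisj i₀ j (fun h => hji h.symm) v hi₀]; omega)]
  · rw [hsum3]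
    have hstep1 : ∑ i ∈ s, mcost c (walkEdges (w i)) ≤ ∑ i ∈ s, 2 * mcost c (P i) :=
      Finset.sum_le_sum (fun i hi => (hw i (hmem_s.mp hi)).2.2)
    have hstep2 : ∑ i ∈ s, 2 * mcost c (P i) ≤ ∑ i, 2 * mcost c (P i) :=
      Finset.sum_le_sum_of_subset_of_nonneg (Finset.subset_univ s)
        (fun i _ _ => by have := mcost_nonneg hnonneg (P i); linarith)
    have hstep3 : ∑ i, 2 * mcost c (P i) = 2 * mcost c X' := by
      rw [hPsum, mcost_sum, Finset.mul_sum]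
    linarith
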